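/- Let A be an m×n real matrix whose rows all have the same sum, and define f(z) = max_{i,j} |z_i − z_j| for complex vectors z. Then for any z ∈ ℂ^n, f(Az) ≤ (1/2)·f(z)·max_{i,j} Σ_{s=1}^n |a_{is} − a_{js}|. -/

import Mathlib

/-!
Write each difference of two rows as a vector `c` with `∑ c = 0`, split it as `c = c⁺ - c⁻` and
let `P = ∑ c⁺ = ∑ c⁻ = ½ ∑ |c|`. Then `P • ∑ c s • z s = ∑ s t, c⁺ s c⁻ t • (z s - z t)`,
whose norm is at most `P² · max ‖z s - z t‖`.
-/

open Finset

section ZeroSumCombination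

variable {ι E : Type*} [Fintype ι] [SeminormedAddCommGroup E] [NormedSpace ℝ E]

lemma sum_posPart_eq_sum_negPart {c : ι → ℝ} (hc : ∑ s, c s = 0) :
    ∑ s, (c s)⁺ = ∑ s, (c s)⁻ := by
  have : ∑ s, ((c s)⁺ - (c s)⁻) = 0 := by simpa only [posPart_sub_negPart] using hc
  rwa [sum_sub_distrib, sub_eq_zero] at this

lemma sum_abs_eq_two_mul_sum_posPart {c : ι → ℝ} (hc : ∑ s, c s = 0) :
    ∑ s, |c s| = 2 * ∑ s, (c s)⁺ := by
  simp_rw [← posPart_add_negPart, sum_add_distrib, ← sum_posPart_eq_sum_negPart hc]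
  ring

lemma sum_smul_sum_smul_sub_eq_sum_sum_smul_sub (a b : ι → ℝ) (z : ι → E) :
    (∑ t, b t) • ∑ s, a s • z s - (∑ s, a s) • ∑ t, b t • z t
      = ∑ s, ∑ t, (a s * b t) • (z s - z t) := by
  simp_rw [smul_sub, sum_sub_distrib, sum_smul, smul_sum, smul_smul]
  rw [sum_comm (f := fun t s => (b t * a s) • z s)]
  simp_rw [mul_comm (b _) (a _)]

lemma norm_sum_sum_smul_sub_le {a b : ι → ℝ} (ha : ∀ s, 0 ≤ a s) (hb : ∀ t, 0 ≤ b t)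
    {z : ι → E} {M : ℝ} (hM : ∀ s t, ‖z s - z t‖ ≤ M) :
    ‖∑ s, ∑ t, (a s * b t) • (z s - z t)‖ ≤ (∑ s, a s) * (∑ t, b t) * M := by
  calc ‖∑ s, ∑ t, (a s * b t) • (z s - z t)‖
      ≤ ∑ s, ∑ t, ‖(a s * b t) • (z s - z t)‖ :=
        (norm_sum_le _ _).trans (sum_le_sum fun s _ => norm_sum_le _ _)
    _ ≤ ∑ s, ∑ t, a s * b t * M := by
        gcongr with s _ t _
        rw [norm_smul, Real.norm_of_nonneg (mul_nonneg (ha s) (hb t))]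
        exact mul_le_mul_of_nonneg_left (hM s t) (mul_nonneg (ha s) (hb t))
    _ = (∑ s, a s) * (∑ t, b t) * M := by
        simp_rw [sum_mul_sum, sum_mul]

theorem norm_sum_smul_le_of_sum_eq_zero {c : ι → ℝ} (hc : ∑ s, c s = 0) {z : ι → E} {M : ℝ}
    (hM : ∀ s t, ‖z s - z t‖ ≤ M) :
    ‖∑ s, c s • z s‖ ≤ 1 / 2 * (∑ s, |c s|) * M := by
  rw [sum_abs_eq_two_mul_sum_posPart hc]
  set P := ∑ s, (c s)⁺
  have hP : ∑ s, (c s)⁻ = P := (sum_posPart_eq_sum_negPart hc).symm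
  have hP0 : 0 ≤ P := sum_nonneg fun s _ => posPart_nonneg _
  have hid : P • ∑ s, c s • z s = ∑ s, ∑ t, ((c s)⁺ * (c t)⁻) • (z s - z t) := by
    rw [← sum_smul_sum_smul_sub_eq_sum_sum_smul_sub, hP, ← smul_sub, ← sum_sub_distrib]
    simp_rw [← sub_smul, posPart_sub_negPart]
  have hbound : P * ‖∑ s, c s • z s‖ ≤ P * (P * M) := by
    have hnorm := norm_sum_sum_smul_sub_le (fun s => posPart_nonneg (c s))
      (fun t => negPart_nonneg (c t)) hM
    rwa [hP, ← hid, norm_smul, Real.norm_of_nonneg hP0, mul_assoc] at hnorm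
  rcases hP0.eq_or_lt with hPzero | hPpos
  · have hc0 : ∀ s, c s = 0 := fun s => by
      have hpos := (sum_eq_zero_iff_of_nonneg fun s _ => posPart_nonneg (c s)).1
        hPzero.symm s (mem_univ s)
      have hneg := (sum_eq_zero_iff_of_nonneg fun s _ => negPart_nonneg (c s)).1
        (hP.trans hPzero.symm) s (mem_univ s)
      rw [← posPart_sub_negPart (c s), hpos, hneg, sub_zero]
    simp [hc0, ← hPzero]
  · calc ‖∑ s, c s • z s‖ ≤ P * M := le_of_mul_le_mul_left hbound hPpos
      _ = 1 / 2 * (2 * P) * M := by ring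

end ZeroSumCombination

lemma Matrix.mulVec_map_ofReal_sub {ι κ : Type*} [Fintype κ] (A : Matrix ι κ ℝ) (z : κ → ℂ)
    (i i' : ι) :
    (A.map Complex.ofReal).mulVec z i - (A.map Complex.ofReal).mulVec z i'
      = ∑ s, (A i s - A i' s) • z s := by
  simp only [Matrix.mulVec, dotProduct, Matrix.map_apply, ← sum_sub_distrib, Complex.real_smul]
  push_cast
  simp_rw [sub_mul]

/-- Oscillation contraction: if the rows of `A` all have the same sum and
`f(z) = max_{i,j}|z_i - z_j|`, then `f(Az) ≤ (1/2)·f(z)·max_{i,j} Σ_s |a_{is}-a_{js}|`. -/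
theorem stmt15 {m n : ℕ} (A : Matrix (Fin m) (Fin n) ℝ)
    (hrow : ∀ i i', ∑ s, A i s = ∑ s, A i' s) (z : Fin n → ℂ) :
    (⨆ p : Fin m × Fin m,
        ‖(A.map Complex.ofReal).mulVec z p.1 - (A.map Complex.ofReal).mulVec z p.2‖)
      ≤ (1 / 2) * (⨆ p : Fin n × Fin n, ‖z p.1 - z p.2‖) *
          (⨆ p : Fin m × Fin m, ∑ s, |A p.1 s - A p.2 s|) := by
  set Sz := ⨆ p : Fin n × Fin n, ‖z p.1 - z p.2‖
  set SA := ⨆ p : Fin m × Fin m, ∑ s, |A p.1 s - A p.2 s|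
  have hSz : 0 ≤ Sz := Real.iSup_nonneg fun _ => norm_nonneg _
  have hSA : 0 ≤ SA := Real.iSup_nonneg fun _ => sum_nonneg fun _ _ => abs_nonneg _
  refine Real.iSup_le (fun ⟨i, i'⟩ => ?_) (by positivity)
  have hc : ∑ s, (A i s - A i' s) = 0 := by rw [sum_sub_distrib, hrow, sub_self]
  rw [Matrix.mulVec_map_ofReal_sub]
  calc _ ≤ 1 / 2 * (∑ s, |A i s - A i' s|) * Sz :=
        norm_sum_smul_le_of_sum_eq_zero hc fun s t =>
          le_ciSup (Finite.bddAbove_range fun p : Fin n × Fin n => ‖z p.1 - z p.2‖) (s, t)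
    _ = 1 / 2 * Sz * ∑ s, |A i s - A i' s| := by ring
    _ ≤ 1 / 2 * Sz * SA := by
        gcongr
        exact le_ciSup (Finite.bddAbove_range fun p : Fin m × Fin m => ∑ s, |A p.1 s - A p.2 s|)
          (i, i')
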